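/- Let E₀ ⊂ 𝒞Ω and let 𝓕 := { E ⊂ ℝⁿ : E is an s-minimal set in Ω and E \ Ω = E₀ }, and assume 𝓕 is nonempty. Then there exists E ∈ 𝓕 with |E ∩ Ω| = sup_{F ∈ 𝓕} |F ∩ Ω|; any two such maximal-volume elements of 𝓕 coincide up to a set of Lebesgue measure zero; and every F ∈ 𝓕 satisfies |F \ E| = 0 (i.e. E contains, up to null sets, every element of 𝓕). Analogously, there exists a unique-up-to-null-sets E' ∈ 𝓕 with |E' ∩ Ω| = inf_{F ∈ 𝓕} |F ∩ Ω|, and every F ∈ 𝓕 satisfies |E' \ F| = 0. -/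

import Mathlib

open MeasureTheory Set Filter Metric ENNReal

noncomputable section
set_option maxHeartbeats 1000000

/-- Euclidean space `ℝⁿ`. -/
abbrev Rn (n : ℕ) : Type := EuclideanSpace ℝ (Fin n)

/-- `Q(Ω) := ℝ²ⁿ \ (𝒞Ω × 𝒞Ω)`. -/
def QQ {n : ℕ} (Ω : Set (Rn n)) : Set (Rn n × Rn n) := (Ωᶜ ×ˢ Ωᶜ)ᶜ

/-- A bounded open set has Lipschitz boundary: near every boundary point, in suitable
orthonormal coordinates, the set coincides with the region above the graph of a
Lipschitz function. -/
def HasLipschitzBoundary {n : ℕ} (Ω : Set (Rn n)) : Prop :=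
  ∀ x ∈ frontier Ω, ∃ r : ℝ, 0 < r ∧ ∃ ν : Rn n, ‖ν‖ = 1 ∧
    ∃ (L : NNReal) (ψ : Rn n → ℝ), LipschitzWith L ψ ∧
      Ω ∩ Metric.ball x r =
        {y ∈ Metric.ball x r | ψ (y - (inner ℝ y ν : ℝ) • ν) < (inner ℝ y ν : ℝ)}

/-- The Gagliardo `W^{s,1}(Ω)` seminorm `[u]_{W^{s,1}(Ω)}` (as an extended real). -/
def gagliardo (n : ℕ) (s : ℝ) (Ω : Set (Rn n)) (u : Rn n → ℝ) : ℝ≥0∞ :=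
  ∫⁻ x in Ω, ∫⁻ y in Ω, ENNReal.ofReal (|u x - u y| / dist x y ^ ((n : ℝ) + s))

/-- The space `𝒲^s(Ω)` of measurable functions `u : ℝⁿ → ℝ` whose restriction to `Ω`
belongs to `W^{s,1}(Ω)`. -/
def WsSpace (n : ℕ) (s : ℝ) (Ω : Set (Rn n)) : Set (Rn n → ℝ) :=
  {u | Measurable u ∧ IntegrableOn u Ω ∧ gagliardo n s Ω u < ⊤}

/-- `u` is an `s`-minimal function in `Ω`. -/
def IsMinimalFn (n : ℕ) (s : ℝ) (Ω : Set (Rn n)) (u : Rn n → ℝ) : Prop :=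
  u ∈ WsSpace n s Ω ∧
    ∀ v ∈ WsSpace n s Ω, (∀ᵐ x ∂(volume.restrict Ωᶜ), v x = u x) →
      ∫ p in QQ Ω, (|u p.1 - u p.2| - |v p.1 - v p.2|) / dist p.1 p.2 ^ ((n : ℝ) + s) ≤ 0

/-- The characteristic function `χ_E`. -/
def chi {n : ℕ} (E : Set (Rn n)) : Rn n → ℝ := E.indicator (fun _ => (1 : ℝ))

/-- The `s`-fractional perimeter `Per_s(E, Ω)` (as an extended real). -/
def perS (n : ℕ) (s : ℝ) (Ω E : Set (Rn n)) : ℝ≥0∞ :=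
  (1 / 2 : ℝ≥0∞) * ∫⁻ p in QQ Ω,
    ENNReal.ofReal (|chi E p.1 - chi E p.2| / dist p.1 p.2 ^ ((n : ℝ) + s))

/-- `E` is an `s`-minimal set in `Ω`. -/
def IsMinimalSet (n : ℕ) (s : ℝ) (Ω E : Set (Rn n)) : Prop :=
  MeasurableSet E ∧ perS n s Ω E < ⊤ ∧
    ∀ F : Set (Rn n), MeasurableSet F → F \ Ω = E \ Ω → perS n s Ω E ≤ perS n s Ω F

/-- The enlarged set `Ω_t := {y : dist(y, Ω) < t}`. -/
def nbhd {n : ℕ} (Ω : Set (Rn n)) (t : ℝ) : Set (Rn n) :=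
  {y | Metric.infDist y Ω < t}

/-- The energy functional `𝒢(u, Ω)` (as an extended real). -/
def calG (n : ℕ) (s : ℝ) (Ω : Set (Rn n)) (u : Rn n → ℝ) : ℝ≥0∞ :=
  (1 / 2 : ℝ≥0∞) * ∫⁻ p in QQ Ω,
    ENNReal.ofReal (|u p.1 - u p.2| / dist p.1 p.2 ^ ((n : ℝ) + s))

open Classical in
/-- `ũ`: equal to `u` on `𝒞Ω` and to `0` on `Ω`. -/
def tildeF {n : ℕ} (Ω : Set (Rn n)) (u : Rn n → ℝ) : Rn n → ℝ :=
  fun x => if x ∈ Ω then 0 else u x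

/-- The renormalised energy functional `𝒢̃(u, Ω)`. -/
def calGt (n : ℕ) (s : ℝ) (Ω : Set (Rn n)) (u : Rn n → ℝ) : ℝ :=
  (1 / 2 : ℝ) * ∫ p in QQ Ω,
    (|u p.1 - u p.2| - |tildeF Ω u p.1 - tildeF Ω u p.2|) / dist p.1 p.2 ^ ((n : ℝ) + s)

/-- The global tail `𝒯_s(u, Ω)` (as an extended real). -/
def tailS (n : ℕ) (s : ℝ) (Ω : Set (Rn n)) (u : Rn n → ℝ) : ℝ≥0∞ :=
  ∫⁻ x in Ω, ∫⁻ y in Ωᶜ, ENNReal.ofReal (|u y| / dist x y ^ ((n : ℝ) + s))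

/-- The local tail `∫_A |φ(y)|/|x−y|^{n+s} dy`, integrated over `x ∈ Ω`. -/
def tailInt (n : ℕ) (s : ℝ) (Ω A : Set (Rn n)) (φ : Rn n → ℝ) : ℝ≥0∞ :=
  ∫⁻ x in Ω, ∫⁻ y in A, ENNReal.ofReal (|φ y| / dist x y ^ ((n : ℝ) + s))

/-!
Submodularity of the fractional perimeter, `Per_s(E ∪ F) + Per_s(E ∩ F) ≤ Per_s(E) + Per_s(F)`,
which already holds pointwise for the integrands, makes the family of `s`-minimal sets with
exterior datum `E₀` a lattice under `∪` and `∩`; by Fatou's lemma it is also closed under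
monotone limits. The partial unions of a volume-maximising sequence then increase to a minimal
set `E` of maximal volume, and for any member `F` the set `E ∪ F` is a member of volume
`|E ∩ Ω| + |F \ E|`, so `|F \ E| = 0`. Intersections give the minimal-volume element dually.
-/

open Topology

section ExtremalMembers

variable {α : Type*} {S : Set (Set α)}

theorem Monotone.exists_mem_eq_biSup {f : Set α → ℝ≥0∞} (hf : Monotone f) (hne : S.Nonempty)
    (hunion : ∀ A ∈ S, ∀ B ∈ S, A ∪ B ∈ S)
    (hiUnion : ∀ G : ℕ → Set α, Monotone G → (∀ k, G k ∈ S) → ⋃ k, G k ∈ S) :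
    ∃ E ∈ S, f E = ⨆ A ∈ S, f A := by
  obtain ⟨u, -, hu, huS⟩ := exists_seq_tendsto_sSup (hne.image f) (OrderTop.bddAbove _)
  choose F hFS hFu using huS
  have hacc : ∀ k, accumulate F k ∈ S := by
    intro k
    induction k with
    | zero => simpa only [accumulate_zero_nat] using hFS 0
    | succ k ih => simpa only [accumulate_succ] using hunion _ ih _ (hFS (k + 1))
  have hE := hiUnion _ monotone_accumulate hacc
  refine ⟨_, hE, le_antisymm (le_iSup₂ (f := fun A _ => f A) _ hE) ?_⟩
  rw [← sSup_image]
  refine le_of_tendsto' hu fun k => ?_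
  rw [← hFu k]
  exact hf (subset_accumulate.trans (subset_iUnion _ k))

theorem Monotone.exists_mem_eq_biInf {f : Set α → ℝ≥0∞} (hf : Monotone f) (hne : S.Nonempty)
    (hinter : ∀ A ∈ S, ∀ B ∈ S, A ∩ B ∈ S)
    (hiInter : ∀ G : ℕ → Set α, Antitone G → (∀ k, G k ∈ S) → ⋂ k, G k ∈ S) :
    ∃ E ∈ S, f E = ⨅ A ∈ S, f A := by
  obtain ⟨u, -, hu, huS⟩ := exists_seq_tendsto_sInf (hne.image f) (OrderBot.bddBelow _)
  choose F hFS hFu using huS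
  have hdis : ∀ k, dissipate F k ∈ S := by
    intro k
    induction k with
    | zero => simpa only [dissipate_zero_nat] using hFS 0
    | succ k ih => simpa only [dissipate_succ] using hinter _ ih _ (hFS (k + 1))
  have hE := hiInter _ antitone_dissipate hdis
  refine ⟨_, hE, le_antisymm ?_ (iInf₂_le (f := fun A _ => f A) _ hE)⟩
  rw [← sInf_image]
  refine ge_of_tendsto' hu fun k => ?_
  rw [← hFu k]
  exact hf ((iInter_subset _ k).trans (dissipate_subset le_rfl))

variable [MeasurableSpace α] {μ : Measure α}

theorem measure_sdiff_eq_zero_of_measure_eq_iSup [IsFiniteMeasure μ]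
    (hmeas : ∀ A ∈ S, MeasurableSet A) (hunion : ∀ A ∈ S, ∀ B ∈ S, A ∪ B ∈ S)
    {E F : Set α} (hE : E ∈ S) (hEmax : μ E = ⨆ A ∈ S, μ A) (hF : F ∈ S) :
    μ (F \ E) = 0 := by
  have hle : μ (E ∪ F) ≤ μ E := hEmax ▸ le_iSup₂ (f := fun A _ => μ A) _ (hunion E hE F hF)
  rw [← union_sdiff_left, measure_sdiff subset_union_left (hmeas E hE).nullMeasurableSet
    (measure_ne_top μ E)]
  exact tsub_eq_zero_of_le hle

theorem measure_sdiff_eq_zero_of_measure_eq_iInf [IsFiniteMeasure μ]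
    (hmeas : ∀ A ∈ S, MeasurableSet A) (hinter : ∀ A ∈ S, ∀ B ∈ S, A ∩ B ∈ S)
    {E F : Set α} (hE : E ∈ S) (hEmin : μ E = ⨅ A ∈ S, μ A) (hF : F ∈ S) :
    μ (E \ F) = 0 := by
  have hle : μ E ≤ μ (E ∩ F) := hEmin ▸ iInf₂_le (f := fun A _ => μ A) _ (hinter E hE F hF)
  rw [← sdiff_self_inter, measure_sdiff inter_subset_left
    ((hmeas E hE).inter (hmeas F hF)).nullMeasurableSet (measure_ne_top μ _)]
  exact tsub_eq_zero_of_le hle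

end ExtremalMembers

section MinimalSets

variable {n : ℕ} {s : ℝ} {Ω : Set (Rn n)}

theorem abs_chi_union_sub_add_abs_chi_inter_sub_le (E F : Set (Rn n)) (x y : Rn n) :
    |chi (E ∪ F) x - chi (E ∪ F) y| + |chi (E ∩ F) x - chi (E ∩ F) y| ≤
      |chi E x - chi E y| + |chi F x - chi F y| := by
  simp only [chi, indicator]
  split_ifs <;> simp_all

theorem measurable_perS_integrand {E : Set (Rn n)} (hE : MeasurableSet E) :
    Measurable fun p : Rn n × Rn n =>
      ENNReal.ofReal (|chi E p.1 - chi E p.2| / dist p.1 p.2 ^ ((n : ℝ) + s)) := by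
  have hchi : Measurable (chi E) := measurable_const.indicator hE
  exact ENNReal.measurable_ofReal.comp
    (((hchi.comp measurable_fst).sub (hchi.comp measurable_snd)).abs.div
      (measurable_dist.pow_const _))

theorem perS_union_add_perS_inter_le {E F : Set (Rn n)} (hE : MeasurableSet E)
    (hF : MeasurableSet F) :
    perS n s Ω (E ∪ F) + perS n s Ω (E ∩ F) ≤ perS n s Ω E + perS n s Ω F := by
  simp only [perS, ← mul_add]
  rw [← lintegral_add_left (measurable_perS_integrand (hE.union hF)),
    ← lintegral_add_left (measurable_perS_integrand hE)]
  gcongr 1 / 2 * ?_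
  refine lintegral_mono fun p => ?_
  have hd : 0 ≤ dist p.1 p.2 ^ ((n : ℝ) + s) := Real.rpow_nonneg dist_nonneg _
  rw [← ENNReal.ofReal_add (by positivity) (by positivity),
    ← ENNReal.ofReal_add (by positivity) (by positivity), ← add_div, ← add_div]
  exact ENNReal.ofReal_le_ofReal
    (div_le_div_of_nonneg_right (abs_chi_union_sub_add_abs_chi_inter_sub_le E F p.1 p.2) hd)

theorem perS_le_liminf {ι : Type*} {l : Filter ι} [l.NeBot] [l.IsCountablyGenerated]
    {G : ι → Set (Rn n)} {E : Set (Rn n)} (hG : ∀ i, MeasurableSet (G i))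
    (hlim : ∀ x, Tendsto (fun i => chi (G i) x) l (𝓝 (chi E x))) :
    perS n s Ω E ≤ liminf (fun i => perS n s Ω (G i)) l := by
  simp only [perS]
  rw [ENNReal.liminf_const_mul_of_ne_zero_of_ne_top (by norm_num) (by norm_num)]
  gcongr
  calc _ = ∫⁻ p in QQ Ω, liminf (fun i =>
          ENNReal.ofReal (|chi (G i) p.1 - chi (G i) p.2| / dist p.1 p.2 ^ ((n : ℝ) + s))) l := by
        refine lintegral_congr fun p => (Tendsto.liminf_eq ?_).symm
        exact ENNReal.tendsto_ofReal (((hlim p.1).sub (hlim p.2)).abs.div_const _)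
    _ ≤ _ := lintegral_liminf_le fun i => measurable_perS_integrand (hG i)

theorem IsMinimalSet.of_perS_le {E G : Set (Rn n)} (hE : IsMinimalSet n s Ω E)
    (hG : MeasurableSet G) (hGE : G \ Ω = E \ Ω) (hle : perS n s Ω G ≤ perS n s Ω E) :
    IsMinimalSet n s Ω G :=
  ⟨hG, hle.trans_lt hE.2.1, fun F hF hFG => hle.trans (hE.2.2 F hF (hFG.trans hGE))⟩

theorem IsMinimalSet.union {E F : Set (Rn n)} (hE : IsMinimalSet n s Ω E)
    (hF : IsMinimalSet n s Ω F) (hFE : F \ Ω = E \ Ω) : IsMinimalSet n s Ω (E ∪ F) := by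
  refine hE.of_perS_le (hE.1.union hF.1) (by rw [union_sdiff_distrib, hFE, union_self]) ?_
  have hF_le : perS n s Ω F ≤ perS n s Ω (E ∩ F) :=
    hF.2.2 _ (hE.1.inter hF.1) (inf_sdiff.trans (by rw [hFE]; exact inf_idem _))
  refine ENNReal.le_of_add_le_add_right hF.2.1.ne ?_
  calc perS n s Ω (E ∪ F) + perS n s Ω F ≤ perS n s Ω (E ∪ F) + perS n s Ω (E ∩ F) := by gcongr
    _ ≤ perS n s Ω E + perS n s Ω F := perS_union_add_perS_inter_le hE.1 hF.1

theorem IsMinimalSet.inter {E F : Set (Rn n)} (hE : IsMinimalSet n s Ω E)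
    (hF : IsMinimalSet n s Ω F) (hFE : F \ Ω = E \ Ω) : IsMinimalSet n s Ω (E ∩ F) := by
  refine hF.of_perS_le (hE.1.inter hF.1) (inf_sdiff.trans (by rw [hFE]; exact inf_idem _)) ?_
  have hE_le : perS n s Ω E ≤ perS n s Ω (E ∪ F) :=
    hE.2.2 _ (hE.1.union hF.1) (by rw [union_sdiff_distrib, hFE, union_self])
  refine ENNReal.le_of_add_le_add_left hE.2.1.ne ?_
  calc perS n s Ω E + perS n s Ω (E ∩ F) ≤ perS n s Ω (E ∪ F) + perS n s Ω (E ∩ F) := by gcongr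
    _ ≤ perS n s Ω E + perS n s Ω F := perS_union_add_perS_inter_le hE.1 hF.1

theorem IsMinimalSet.of_tendsto_chi {G : ℕ → Set (Rn n)} {E : Set (Rn n)}
    (hG : ∀ k, IsMinimalSet n s Ω (G k)) (hGE : ∀ k, G k \ Ω = E \ Ω) (hE : MeasurableSet E)
    (hlim : ∀ x, Tendsto (fun k => chi (G k) x) atTop (𝓝 (chi E x))) :
    IsMinimalSet n s Ω E := by
  refine (hG 0).of_perS_le hE (hGE 0).symm ((perS_le_liminf (fun k => (hG k).1) hlim).trans ?_)
  exact liminf_le_of_frequently_le' <| Frequently.of_forall fun k =>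
    (hG k).2.2 _ (hG 0).1 ((hGE 0).trans (hGE k).symm)

def minimalSets (n : ℕ) (s : ℝ) (Ω E₀ : Set (Rn n)) : Set (Set (Rn n)) :=
  {E | IsMinimalSet n s Ω E ∧ E \ Ω = E₀}

variable {E₀ : Set (Rn n)}

theorem union_mem_minimalSets {E F : Set (Rn n)} (hE : E ∈ minimalSets n s Ω E₀)
    (hF : F ∈ minimalSets n s Ω E₀) : E ∪ F ∈ minimalSets n s Ω E₀ :=
  ⟨hE.1.union hF.1 (hF.2.trans hE.2.symm), by rw [union_sdiff_distrib, hE.2, hF.2, union_self]⟩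

theorem inter_mem_minimalSets {E F : Set (Rn n)} (hE : E ∈ minimalSets n s Ω E₀)
    (hF : F ∈ minimalSets n s Ω E₀) : E ∩ F ∈ minimalSets n s Ω E₀ :=
  ⟨hE.1.inter hF.1 (hF.2.trans hE.2.symm), inf_sdiff.trans (by rw [hE.2, hF.2]; exact inf_idem _)⟩

theorem iUnion_mem_minimalSets {G : ℕ → Set (Rn n)} (hmono : Monotone G)
    (hG : ∀ k, G k ∈ minimalSets n s Ω E₀) : ⋃ k, G k ∈ minimalSets n s Ω E₀ := by
  have hext : (⋃ k, G k) \ Ω = E₀ := by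
    simp only [iUnion_sdiff, fun k => (hG k).2, iUnion_const]
  refine ⟨IsMinimalSet.of_tendsto_chi (fun k => (hG k).1) (fun k => (hG k).2.trans hext.symm)
    (.iUnion fun k => (hG k).1.1) fun x => ?_, hext⟩
  exact (hmono.tendsto_indicator G _ x).mono_right (pure_le_nhds _)

theorem iInter_mem_minimalSets {G : ℕ → Set (Rn n)} (hanti : Antitone G)
    (hG : ∀ k, G k ∈ minimalSets n s Ω E₀) : ⋂ k, G k ∈ minimalSets n s Ω E₀ := by
  have hext : (⋂ k, G k) \ Ω = E₀ := by
    rw [sdiff_eq, iInter_inter]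
    simp only [← sdiff_eq, (hG _).2, iInter_const]
  refine ⟨IsMinimalSet.of_tendsto_chi (fun k => (hG k).1) (fun k => (hG k).2.trans hext.symm)
    (.iInter fun k => (hG k).1.1) fun x => ?_, hext⟩
  exact (hanti.tendsto_indicator G _ x).mono_right (pure_le_nhds _)

theorem sdiff_subset_of_mem_minimalSets {E F : Set (Rn n)} (hE : E ∈ minimalSets n s Ω E₀)
    (hF : F ∈ minimalSets n s Ω E₀) : F \ E ⊆ Ω := by
  intro x hx
  by_contra hxΩ
  exact hx.2 (hE.2 ▸ hF.2 ▸ ⟨hx.1, hxΩ⟩ : x ∈ E \ Ω).1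

theorem volume_sdiff_eq_zero_of_volume_inter_eq_iSup (hΩ : volume Ω ≠ ∞) {E F : Set (Rn n)}
    (hE : E ∈ minimalSets n s Ω E₀)
    (hEmax : volume (E ∩ Ω) = ⨆ A ∈ minimalSets n s Ω E₀, volume (A ∩ Ω))
    (hF : F ∈ minimalSets n s Ω E₀) : volume (F \ E) = 0 := by
  have : IsFiniteMeasure (volume.restrict Ω) := isFiniteMeasure_restrict.2 hΩ
  rw [← Measure.restrict_eq_self volume (sdiff_subset_of_mem_minimalSets hE hF)]
  refine measure_sdiff_eq_zero_of_measure_eq_iSup (fun A hA => hA.1.1)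
    (fun A hA B hB => union_mem_minimalSets hA hB) hE ?_ hF
  rw [Measure.restrict_apply hE.1.1, hEmax]
  exact biSup_congr fun A hA => (Measure.restrict_apply hA.1.1).symm

theorem volume_sdiff_eq_zero_of_volume_inter_eq_iInf (hΩ : volume Ω ≠ ∞) {E F : Set (Rn n)}
    (hE : E ∈ minimalSets n s Ω E₀)
    (hEmin : volume (E ∩ Ω) = ⨅ A ∈ minimalSets n s Ω E₀, volume (A ∩ Ω))
    (hF : F ∈ minimalSets n s Ω E₀) : volume (E \ F) = 0 := by
  have : IsFiniteMeasure (volume.restrict Ω) := isFiniteMeasure_restrict.2 hΩ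
  rw [← Measure.restrict_eq_self volume (sdiff_subset_of_mem_minimalSets hF hE)]
  refine measure_sdiff_eq_zero_of_measure_eq_iInf (fun A hA => hA.1.1)
    (fun A hA B hB => inter_mem_minimalSets hA hB) hE ?_ hF
  rw [Measure.restrict_apply hE.1.1, hEmin]
  exact biInf_congr fun A hA => (Measure.restrict_apply hA.1.1).symm

end MinimalSets

theorem maximal_and_minimal_minimal_sets_general
    (n : ℕ) (s : ℝ)
    (Ω : Set (Rn n)) (hΩb : Bornology.IsBounded Ω)
    (E₀ : Set (Rn n))
    (Fam : Set (Set (Rn n)))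
    (hFam : Fam = {E : Set (Rn n) | IsMinimalSet n s Ω E ∧ E \ Ω = E₀})
    (hne : Fam.Nonempty) :
    (∃ E ∈ Fam,
      (volume (E ∩ Ω) = ⨆ F ∈ Fam, volume (F ∩ Ω)) ∧
      (∀ E' ∈ Fam, (volume (E' ∩ Ω) = ⨆ F ∈ Fam, volume (F ∩ Ω)) →
        volume (symmDiff E E') = 0) ∧
      (∀ F ∈ Fam, volume (F \ E) = 0)) ∧
    (∃ E' ∈ Fam,
      (volume (E' ∩ Ω) = ⨅ F ∈ Fam, volume (F ∩ Ω)) ∧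
      (∀ E'' ∈ Fam, (volume (E'' ∩ Ω) = ⨅ F ∈ Fam, volume (F ∩ Ω)) →
        volume (symmDiff E' E'') = 0) ∧
      (∀ F ∈ Fam, volume (E' \ F) = 0)) := by
  obtain rfl : Fam = minimalSets n s Ω E₀ := hFam
  have hΩ : volume Ω ≠ ∞ := hΩb.measure_lt_top.ne
  have hmono : Monotone fun A : Set (Rn n) => volume (A ∩ Ω) :=
    fun _ _ h => measure_mono (inter_subset_inter_left _ h)
  obtain ⟨E, hE, hEmax⟩ := hmono.exists_mem_eq_biSup hne
    (fun _ hA _ hB => union_mem_minimalSets hA hB) fun _ => iUnion_mem_minimalSets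
  obtain ⟨E', hE', hE'min⟩ := hmono.exists_mem_eq_biInf hne
    (fun _ hA _ hB => inter_mem_minimalSets hA hB) fun _ => iInter_mem_minimalSets
  refine ⟨⟨E, hE, hEmax, fun E₁ hE₁ hE₁max => ?_,
      fun F hF => volume_sdiff_eq_zero_of_volume_inter_eq_iSup hΩ hE hEmax hF⟩,
    ⟨E', hE', hE'min, fun E₁ hE₁ hE₁min => ?_,
      fun F hF => volume_sdiff_eq_zero_of_volume_inter_eq_iInf hΩ hE' hE'min hF⟩⟩
  · rw [symmDiff_def]
    exact measure_union_null (volume_sdiff_eq_zero_of_volume_inter_eq_iSup hΩ hE₁ hE₁max hE)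
      (volume_sdiff_eq_zero_of_volume_inter_eq_iSup hΩ hE hEmax hE₁)
  · rw [symmDiff_def]
    exact measure_union_null (volume_sdiff_eq_zero_of_volume_inter_eq_iInf hΩ hE' hE'min hE₁)
      (volume_sdiff_eq_zero_of_volume_inter_eq_iInf hΩ hE₁ hE₁min hE')

theorem maximal_and_minimal_minimal_sets
    (n : ℕ) (hn : 1 ≤ n) (s : ℝ) (hs : s ∈ Set.Ioo (0 : ℝ) 1)
    (Ω : Set (Rn n)) (hΩo : IsOpen Ω) (hΩb : Bornology.IsBounded Ω)
    (hΩl : HasLipschitzBoundary Ω)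
    (E₀ : Set (Rn n)) (hE₀ : E₀ ⊆ Ωᶜ)
    (Fam : Set (Set (Rn n)))
    (hFam : Fam = {E : Set (Rn n) | IsMinimalSet n s Ω E ∧ E \ Ω = E₀})
    (hne : Fam.Nonempty) :
    (∃ E ∈ Fam,
      (volume (E ∩ Ω) = ⨆ F ∈ Fam, volume (F ∩ Ω)) ∧
      (∀ E' ∈ Fam, (volume (E' ∩ Ω) = ⨆ F ∈ Fam, volume (F ∩ Ω)) →
        volume (symmDiff E E') = 0) ∧
      (∀ F ∈ Fam, volume (F \ E) = 0)) ∧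
    (∃ E' ∈ Fam,
      (volume (E' ∩ Ω) = ⨅ F ∈ Fam, volume (F ∩ Ω)) ∧
      (∀ E'' ∈ Fam, (volume (E'' ∩ Ω) = ⨅ F ∈ Fam, volume (F ∩ Ω)) →
        volume (symmDiff E' E'') = 0) ∧
      (∀ F ∈ Fam, volume (E' \ F) = 0)) :=
  maximal_and_minimal_minimal_sets_general n s Ω hΩb E₀ Fam hFam hne
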